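/- arXiv:0708.2327 — 3 statements merged into one kernel-verified Lean document; each statement's English description precedes it below -/
import Mathlib

section
/- For any group G and x ∈ G, the set Cyc_G(x) = {y ∈ G | ⟨x,y⟩ is cyclic} is a union of cosets of Cyc(G); in particular, if Cyc_G(x) is finite then Cyc(G) is finite and |Cyc(G)| divides |Cyc_G(x)|. -/
def cycSet (G : Type*) [Group G] : Set G :=
  {y | ∀ x : G, IsCyclic ↥(Subgroup.closure ({x, y} : Set G))}

def cycOf {G : Type*} [Group G] (x : G) : Set G :=
  {y | IsCyclic ↥(Subgroup.closure ({x, y} : Set G))}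

lemma cyclic_of_le {G : Type*} [Group G] {H K : Subgroup G} (h : H ≤ K)
    (hK : IsCyclic ↥K) : IsCyclic ↥H := by
  haveI := hK
  exact isCyclic_of_surjective (Subgroup.subgroupOfEquivOfLe h)
    (Subgroup.subgroupOfEquivOfLe h).surjective

lemma keyA {G : Type*} [Group G] (x y c : G)
    (hy : IsCyclic ↥(Subgroup.closure ({x, y} : Set G)))
    (hc : ∀ z : G, IsCyclic ↥(Subgroup.closure ({z, c} : Set G))) :
    IsCyclic ↥(Subgroup.closure ({x, y * c} : Set G)) := by
  obtain ⟨g, hg⟩ := hy.exists_generator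
  have hle : Subgroup.closure ({x, y} : Set G) ≤ Subgroup.zpowers (g : G) := by
    intro a ha
    obtain ⟨n, hn⟩ := hg ⟨a, ha⟩
    exact ⟨n, by simpa using congrArg Subtype.val hn⟩
  have hz : Subgroup.zpowers (g : G) ≤ Subgroup.closure ({(g : G), c} : Set G) :=
    Subgroup.zpowers_le.2 (Subgroup.subset_closure (by simp))
  refine cyclic_of_le ?_ (hc (g : G))
  rw [Subgroup.closure_le]
  rintro a (rfl | rfl)
  · exact hz (hle (Subgroup.subset_closure (by simp)))
  · exact mul_mem (hz (hle (Subgroup.subset_closure (by simp))))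
      (Subgroup.subset_closure (by simp))

lemma zpowers_isCyclic {G : Type*} [Group G] (x : G) :
    IsCyclic ↥(Subgroup.zpowers x) := by
  refine ⟨⟨⟨x, Subgroup.mem_zpowers x⟩, fun a => ?_⟩⟩
  obtain ⟨n, hn⟩ := a.2
  exact ⟨n, Subtype.ext (by simpa using hn)⟩

lemma one_mem_cycOf {G : Type*} [Group G] (x : G) : (1 : G) ∈ cycOf x := by
  refine cyclic_of_le (K := Subgroup.zpowers x) ?_ (zpowers_isCyclic x)
  rw [Subgroup.closure_le]
  rintro a (rfl | rfl) <;> simp [Subgroup.mem_zpowers, Subgroup.one_mem]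

lemma closure_pair_inv {G : Type*} [Group G] (z c : G) :
    Subgroup.closure ({z, c⁻¹} : Set G) = Subgroup.closure ({z, c} : Set G) := by
  have hz1 : z ∈ Subgroup.closure ({z, c} : Set G) :=
    Subgroup.subset_closure (Set.mem_insert _ _)
  have hc1 : c ∈ Subgroup.closure ({z, c} : Set G) :=
    Subgroup.subset_closure (Set.mem_insert_of_mem _ rfl)
  have hz2 : z ∈ Subgroup.closure ({z, c⁻¹} : Set G) :=
    Subgroup.subset_closure (Set.mem_insert _ _)
  have hc2 : c⁻¹ ∈ Subgroup.closure ({z, c⁻¹} : Set G) :=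
    Subgroup.subset_closure (Set.mem_insert_of_mem _ rfl)
  apply le_antisymm
  · rw [Subgroup.closure_le]
    intro a ha
    rcases ha with rfl | rfl
    · exact hz1
    · exact inv_mem hc1
  · rw [Subgroup.closure_le]
    intro a ha
    rcases ha with rfl | rfl
    · exact hz2
    · have := inv_mem hc2
      rwa [inv_inv] at this

def cycSubgroup (G : Type*) [Group G] : Subgroup G where
  carrier := cycSet G
  one_mem' := fun z => one_mem_cycOf z
  mul_mem' := fun {c} {d} hc hd z => keyA z c d (hc z) hd
  inv_mem' := by
    intro c hc z
    rw [closure_pair_inv]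
    exact hc z

/-- `Cyc_G(x)` is a union of cosets of `Cyc(G)`; in particular if `Cyc_G(x)` is
finite then `Cyc(G)` is finite and `|Cyc(G)|` divides `|Cyc_G(x)|`. -/
theorem cycOf_union_of_cosets {G : Type*} [Group G] (x : G) :
    (∀ y ∈ cycOf x, ∀ c ∈ cycSet G, y * c ∈ cycOf x) ∧
    ((cycOf x).Finite → (cycSet G).Finite ∧ (cycSet G).ncard ∣ (cycOf x).ncard) := by
  constructor
  · intro y hy c hc
    exact keyA x y c hy hc
  · intro hS
    have hsub : cycSet G ⊆ cycOf x := fun c hc => hc x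
    refine ⟨hS.subset hsub, ?_⟩
    set H := cycSubgroup G with hH
    have hsat : cycOf x = QuotientGroup.mk ⁻¹' (QuotientGroup.mk (s := H) '' cycOf x) := by
      apply subset_antisymm (Set.subset_preimage_image _ _)
      intro y' hy'
      obtain ⟨y, hy, hq⟩ := hy'
      have hm : y⁻¹ * y' ∈ H := QuotientGroup.eq.1 hq
      have hc' : y⁻¹ * y' ∈ cycSet G := hm
      have key := keyA x y (y⁻¹ * y') hy hc'
      rwa [mul_inv_cancel_left] at key
    have e := QuotientGroup.preimageMkEquivSubgroupProdSet H
      (QuotientGroup.mk '' cycOf x)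
    rw [← hsat] at e
    have hcard : (cycOf x).ncard = Nat.card H * (QuotientGroup.mk (s := H) '' cycOf x).ncard := by
      rw [← Nat.card_coe_set_eq, ← Nat.card_coe_set_eq, Nat.card_congr e,
        Nat.card_prod]
    have hHcard : (cycSet G).ncard = Nat.card H := by
      rw [← Nat.card_coe_set_eq]
      rfl
    rw [hcard, hHcard]
    exact Dvd.intro _ rfl
end

section
/- Let G be a group that is not locally cyclic. The non-cyclic graph Γ_G is complete (any two distinct vertices are adjacent) if and only if G is an elementary abelian 2-group. -/
open Subgroup

section Aux

variable {G : Type*} [Group G]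

lemma aux_isCyclic_zpowers (g : G) : IsCyclic ↥(zpowers g) := by
  refine ⟨⟨g, mem_zpowers g⟩, fun x => ?_⟩
  obtain ⟨n, hn⟩ := x.2
  exact ⟨n, Subtype.ext (by simpa using hn)⟩

lemma aux_isCyclic_congr {H K : Subgroup G} (h : H = K) (hH : IsCyclic ↥H) :
    IsCyclic ↥K := h ▸ hH

lemma aux_closure_pair (x y : G) :
    closure ({x, y} : Set G) = zpowers x ⊔ zpowers y := by
  rw [show ({x, y} : Set G) = {x} ∪ {y} by rfl, Subgroup.closure_union,
    zpowers_eq_closure, zpowers_eq_closure]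

lemma aux_pair_inv (x y : G) :
    closure ({x, y⁻¹} : Set G) = closure ({x, y} : Set G) := by
  rw [aux_closure_pair, aux_closure_pair, zpowers_inv]

lemma aux_inv_mem_cycSet {y : G} (hy : y ∈ cycSet G) : y⁻¹ ∈ cycSet G := by
  intro x
  exact aux_isCyclic_congr (aux_pair_inv x y).symm (hy x)

lemma aux_mul_mem_cycSet {b c : G} (hb : b ∈ cycSet G) (hc : c ∈ cycSet G) :
    b * c ∈ cycSet G := by
  intro z
  -- closure {z, b} is cyclic, generated by some d
  have h1 : IsCyclic ↥(closure ({z, b} : Set G)) := hb z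
  obtain ⟨d, hd⟩ := h1.exists_generator
  have hd' : closure ({z, b} : Set G) ≤ zpowers (d : G) := by
    intro w hw
    obtain ⟨n, hn⟩ := hd ⟨w, hw⟩
    exact ⟨n, by simpa using congrArg Subtype.val hn⟩
  have h2 : IsCyclic ↥(closure ({(d : G), c} : Set G)) := hc (d : G)
  obtain ⟨e, he⟩ := h2.exists_generator
  have he' : closure ({(d : G), c} : Set G) ≤ zpowers (e : G) := by
    intro w hw
    obtain ⟨n, hn⟩ := he ⟨w, hw⟩
    exact ⟨n, by simpa using congrArg Subtype.val hn⟩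
  have hdz : zpowers (d : G) ≤ zpowers (e : G) := by
    refine le_trans ?_ he'
    rw [zpowers_eq_closure, closure_le]
    exact Set.singleton_subset_iff.2 (subset_closure (Set.mem_insert _ _))
  have hz : z ∈ zpowers (e : G) :=
    hdz (hd' (subset_closure (Set.mem_insert _ _)))
  have hbm : b ∈ zpowers (e : G) :=
    hdz (hd' (subset_closure (Set.mem_insert_of_mem _ rfl)))
  have hcm : c ∈ zpowers (e : G) :=
    he' (subset_closure (Set.mem_insert_of_mem _ rfl))
  have hle : closure ({z, b * c} : Set G) ≤ zpowers (e : G) := by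
    rw [closure_le]
    rintro w (rfl | rfl)
    · exact hz
    · exact mul_mem hbm hcm
  have : IsCyclic ↥(zpowers (e : G)) := aux_isCyclic_zpowers _
  exact Subgroup.isCyclic_of_le hle

lemma aux_one_mem_cycSet : (1 : G) ∈ cycSet G := by
  intro x
  have h : closure ({x, (1 : G)} : Set G) = zpowers x := by
    rw [aux_closure_pair]
    simp
  exact aux_isCyclic_congr h.symm (aux_isCyclic_zpowers x)

end Aux

/-- For a non locally cyclic group `G`, the non-cyclic graph `Γ_G` is complete
iff `G` is an elementary abelian 2-group. -/
theorem noncyclic_graph_complete_iff {G : Type*} [Group G]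
    (hG : ∃ S : Finset G, ¬ IsCyclic ↥(Subgroup.closure (S : Set G))) :
    (∀ x y : G, x ∉ cycSet G → y ∉ cycSet G → x ≠ y →
        ¬ IsCyclic ↥(Subgroup.closure ({x, y} : Set G))) ↔
      ∀ x : G, x * x = 1 := by
  constructor
  · intro hcomp
    -- Step A: every element outside cycSet is an involution
    have stepA : ∀ x : G, x ∉ cycSet G → x * x = 1 := by
      intro x hx
      by_contra h
      have hne : x ≠ x⁻¹ := by
        intro he
        exact h (by nth_rewrite 2 [he]; exact mul_inv_cancel x)
      have hxinv : x⁻¹ ∉ cycSet G := by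
        intro hmem
        exact hx (by simpa using aux_inv_mem_cycSet hmem)
      have := hcomp x x⁻¹ hx hxinv hne
      apply this
      have heq : closure ({x, x⁻¹} : Set G) = zpowers x := by
        rw [aux_closure_pair, zpowers_inv, sup_idem]
      exact aux_isCyclic_congr heq.symm (aux_isCyclic_zpowers x)
    -- Step B: there exists an element outside cycSet
    have stepB : ∃ a : G, a ∉ cycSet G := by
      by_contra h
      push_neg at h
      classical
      obtain ⟨S, hS⟩ := hG
      apply hS
      clear hS
      induction S using Finset.induction_on with
      | empty =>
        have : closure ((∅ : Finset G) : Set G) = ⊥ := by simp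
        exact aux_isCyclic_congr this.symm inferInstance
      | @insert a S ha ih =>
        obtain ⟨c, hc⟩ := ih.exists_generator
        have hc' : closure (S : Set G) ≤ zpowers (c : G) := by
          intro w hw
          obtain ⟨n, hn⟩ := hc ⟨w, hw⟩
          exact ⟨n, by simpa using congrArg Subtype.val hn⟩
        have hc'' : zpowers (c : G) ≤ closure (S : Set G) := by
          rw [zpowers_eq_closure, closure_le]
          exact Set.singleton_subset_iff.2 c.2
        have heq : closure ((insert a S : Finset G) : Set G)
            = closure ({a, (c : G)} : Set G) := by
          rw [Finset.coe_insert, aux_closure_pair,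
            show (insert a (S : Set G)) = {a} ∪ (S : Set G) by rfl,
            Subgroup.closure_union, ← zpowers_eq_closure]
          exact congrArg (zpowers a ⊔ ·) (le_antisymm hc' hc'')
        exact aux_isCyclic_congr heq.symm (h (c : G) a)
    -- Step C: conclude for all elements
    intro y
    by_cases hy : y ∈ cycSet G
    · obtain ⟨a, ha⟩ := stepB
      have hay : a * y ∉ cycSet G := by
        intro hmem
        apply ha
        have := aux_mul_mem_cycSet hmem (aux_inv_mem_cycSet hy)
        simpa using this
      have h1 : (a * y) * (a * y) = 1 := stepA _ hay
      have h2 : a * a = 1 := stepA _ ha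
      -- a and y commute since ⟨a, y⟩ is cyclic
      have hcyc : IsCyclic ↥(closure ({a, y} : Set G)) := hy a
      have hcomm : a * y = y * a := by
        have hA : a ∈ closure ({a, y} : Set G) :=
          subset_closure (Set.mem_insert _ _)
        have hY : y ∈ closure ({a, y} : Set G) :=
          subset_closure (Set.mem_insert_of_mem _ rfl)
        obtain ⟨g, hg⟩ := hcyc.exists_generator
        obtain ⟨m, hm⟩ := hg ⟨a, hA⟩
        obtain ⟨n, hn⟩ := hg ⟨y, hY⟩
        have hm' : (g : G) ^ m = a := by simpa using congrArg Subtype.val hm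
        have hn' : (g : G) ^ n = y := by simpa using congrArg Subtype.val hn
        calc a * y = (g : G) ^ m * (g : G) ^ n := by rw [hm', hn']
          _ = (g : G) ^ (m + n) := by rw [zpow_add]
          _ = (g : G) ^ (n + m) := by rw [add_comm]
          _ = (g : G) ^ n * (g : G) ^ m := by rw [zpow_add]
          _ = y * a := by rw [hm', hn']
      calc y * y = 1 * (y * y) := by rw [one_mul]
        _ = (a * a) * (y * y) := by rw [h2]
        _ = a * (a * y) * y := by group
        _ = a * (y * a) * y := by rw [hcomm]
        _ = (a * y) * (a * y) := by group
        _ = 1 := h1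
    · exact stepA y hy
  · intro h2 x y hx hy hxy hcyc
    obtain ⟨g, hg⟩ := hcyc.exists_generator
    set c : G := (g : G) with hc
    have hc2 : c * c = 1 := h2 c
    have key : ∀ w : G, w ∈ closure ({x, y} : Set G) → w = 1 ∨ w = c := by
      intro w hw
      obtain ⟨n, hn⟩ := hg ⟨w, hw⟩
      have hn' : c ^ n = w := by simpa using congrArg Subtype.val hn
      rcases Int.even_or_odd n with ⟨k, hk⟩ | ⟨k, hk⟩
      · left
        rw [← hn', hk, ← two_mul, zpow_mul]
        have : c ^ (2 : ℤ) = 1 := by rw [zpow_two]; exact hc2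
        rw [this, one_zpow]
      · right
        rw [← hn', hk, zpow_add, zpow_mul]
        have : c ^ (2 : ℤ) = 1 := by rw [zpow_two]; exact hc2
        rw [this, one_zpow, one_mul, zpow_one]
    have hx1 : x ≠ 1 := fun h => hx (h ▸ aux_one_mem_cycSet)
    have hy1 : y ≠ 1 := fun h => hy (h ▸ aux_one_mem_cycSet)
    have hxm : x ∈ closure ({x, y} : Set G) := subset_closure (Set.mem_insert _ _)
    have hym : y ∈ closure ({x, y} : Set G) :=
      subset_closure (Set.mem_insert_of_mem _ rfl)
    rcases key x hxm with h | h
    · exact hx1 h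
    · rcases key y hym with h' | h'
      · exact hy1 h'
      · exact hxy (h.trans h'.symm)
end

section
/- Let G be a non-locally-cyclic group with Z(G) = Cyc(G). Then for any two distinct non-adjacent vertices x, y of the non-cyclic graph Γ_G there is a vertex adjacent to both; hence diam(Γ_G) = 2 when G is not an elementary abelian 2-group. -/
/-- Adjacency in the non-cyclic graph. -/
def ncAdj {G : Type*} [Group G] (x y : G) : Prop :=
  x ≠ y ∧ ¬ IsCyclic ↥(Subgroup.closure ({x, y} : Set G))

open Subgroup

private lemma isCyclic_zpowers' {G : Type*} [Group G] (a : G) : IsCyclic ↥(zpowers a) := by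
  refine ⟨⟨a, mem_zpowers a⟩, ?_⟩
  rintro ⟨x, k, rfl⟩
  exact ⟨k, by ext; simp⟩

private lemma comm_of_cyclic' {G : Type*} [Group G] {a b : G}
    (h : IsCyclic ↥(Subgroup.closure ({a, b} : Set G))) : a * b = b * a := by
  have ha : a ∈ Subgroup.closure ({a, b} : Set G) := subset_closure (by simp)
  have hb : b ∈ Subgroup.closure ({a, b} : Set G) := subset_closure (by simp)
  letI := h
  letI : CommGroup ↥(Subgroup.closure ({a, b} : Set G)) := IsCyclic.commGroup
  have := mul_comm (⟨a, ha⟩ : Subgroup.closure ({a, b} : Set G)) ⟨b, hb⟩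
  exact congrArg Subtype.val this

private lemma subgroup_eq_zpowers_of_cyclic {G : Type*} [Group G] (H : Subgroup G)
    (h : IsCyclic ↥H) : ∃ c : G, H = zpowers c := by
  obtain ⟨⟨c, hcH⟩, hc⟩ := h.exists_generator
  refine ⟨c, le_antisymm ?_ ?_⟩
  · intro x hx
    obtain ⟨k, hk⟩ := mem_zpowers_iff.mp (hc ⟨x, hx⟩)
    exact ⟨k, congrArg Subtype.val hk⟩
  · rintro x ⟨k, rfl⟩
    exact zpow_mem hcH k

private lemma finset_cyclic {G : Type*} [Group G]
    (h : ∀ y x : G, IsCyclic ↥(Subgroup.closure ({x, y} : Set G)))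
    (S : Finset G) : IsCyclic ↥(Subgroup.closure (S : Set G)) := by
  classical
  induction S using Finset.induction_on with
  | empty => rw [Finset.coe_empty, Subgroup.closure_empty]; infer_instance
  | @insert a S ha ih =>
    obtain ⟨c, hc⟩ := subgroup_eq_zpowers_of_cyclic _ ih
    have : Subgroup.closure ((insert a S : Finset G) : Set G)
        = Subgroup.closure ({a, c} : Set G) := by
      rw [Finset.coe_insert, ← Set.singleton_union, Subgroup.closure_union, hc,
        zpowers_eq_closure, ← Subgroup.closure_union, Set.singleton_union]
    rw [this]
    exact h c a

private lemma cyclic_pair_inv {G : Type*} [Group G] (x : G) :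
    IsCyclic ↥(Subgroup.closure ({x, x⁻¹} : Set G)) := by
  have h1 : ({x, x⁻¹} : Set G) ⊆ ↑(zpowers x) := by
    rintro u hu
    rcases hu with rfl | hu
    · exact mem_zpowers _
    · rw [Set.mem_singleton_iff] at hu; subst hu; exact inv_mem (mem_zpowers x)
  have h2 : Subgroup.closure ({x, x⁻¹} : Set G) = zpowers x :=
    le_antisymm ((Subgroup.closure_le _).mpr h1)
      (by rw [zpowers_eq_closure]; exact Subgroup.closure_mono (by simp))
  rw [h2]
  exact isCyclic_zpowers' x

/-- If `G` is not locally cyclic and `Z(G) = Cyc(G)`, then any two distinct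
non-adjacent vertices of `Γ_G` have a common neighbour; hence `diam(Γ_G) = 2`
when `G` is not an elementary abelian 2-group. -/
theorem noncyclic_graph_diam_two_of_center_eq_cyc {G : Type*} [Group G]
    (hG : ∃ S : Finset G, ¬ IsCyclic ↥(Subgroup.closure (S : Set G)))
    (hZ : (Subgroup.center G : Set G) = cycSet G) :
    (∀ x y : G, x ∉ cycSet G → y ∉ cycSet G → x ≠ y → ¬ ncAdj x y →
      ∃ z, z ∉ cycSet G ∧ ncAdj x z ∧ ncAdj y z) ∧
    ((¬ ∀ x : G, x * x = 1) →
      ∃ x y : G, x ∉ cycSet G ∧ y ∉ cycSet G ∧ x ≠ y ∧ ¬ ncAdj x y) := by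
  have center_iff : ∀ u : G, u ∈ cycSet G ↔ u ∈ Subgroup.center G := by
    intro u
    rw [← SetLike.mem_coe, hZ]
  constructor
  · intro x y hx hy hxy hnadj
    have hcyc : IsCyclic ↥(Subgroup.closure ({x, y} : Set G)) := by
      by_contra hc; exact hnadj ⟨hxy, hc⟩
    have hcomm : x * y = y * x := comm_of_cyclic' hcyc
    -- x and y are not central
    have hxZ : x ∉ Subgroup.center G := fun h => hx ((center_iff x).mpr h)
    have hyZ : y ∉ Subgroup.center G := fun h => hy ((center_iff y).mpr h)
    obtain ⟨b, hb⟩ : ∃ b : G, ¬ b * x = x * b := by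
      by_contra h; push_neg at h; exact hxZ (Subgroup.mem_center_iff.mpr h)
    obtain ⟨a, ha⟩ : ∃ a : G, ¬ a * y = y * a := by
      by_contra h; push_neg at h; exact hyZ (Subgroup.mem_center_iff.mpr h)
    obtain ⟨z, hzx, hzy⟩ : ∃ z : G, ¬ z * x = x * z ∧ ¬ z * y = y * z := by
      by_cases h1 : b * y = y * b
      · by_cases h2 : a * x = x * a
        · refine ⟨a * b, ?_, ?_⟩
          · intro h
            apply hb
            have : a * (b * x) = a * (x * b) := by
              calc a * (b * x) = a * b * x := by group
                _ = x * (a * b) := h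
                _ = x * a * b := by group
                _ = a * x * b := by rw [h2]
                _ = a * (x * b) := by group
            exact mul_left_cancel this
          · intro h
            apply ha
            have : a * y * b = y * a * b := by
              calc a * y * b = a * (y * b) := by group
                _ = a * (b * y) := by rw [h1]
                _ = a * b * y := by group
                _ = y * (a * b) := h
                _ = y * a * b := by group
            exact mul_right_cancel this
        · exact ⟨a, h2, ha⟩
      · exact ⟨b, hb, h1⟩
    refine ⟨z, ?_, ⟨?_, ?_⟩, ⟨?_, ?_⟩⟩
    · intro h
      exact hzx (comm_of_cyclic' (h x)).symm
    · rintro rfl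
      exact hzy hcomm
    · intro hc
      exact hzx (comm_of_cyclic' hc).symm
    · rintro rfl
      exact hzx hcomm.symm
    · intro hc
      exact hzy (comm_of_cyclic' hc).symm
  · intro hsq
    push_neg at hsq
    obtain ⟨g, hg⟩ := hsq
    obtain ⟨S, hS⟩ := hG
    obtain ⟨a, ha⟩ : ∃ a : G, a ∉ cycSet G := by
      by_contra h; push_neg at h
      exact hS (finset_cyclic (fun y x => h y x) S)
    -- produce x ∉ cycSet with x * x ≠ 1
    obtain ⟨x, hx, hxx⟩ : ∃ x : G, x ∉ cycSet G ∧ x * x ≠ 1 := by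
      by_cases hgc : g ∈ cycSet G
      · have hgZ : g ∈ Subgroup.center G := (center_iff g).mp hgc
        by_cases haa : a * a = 1
        · refine ⟨a * g, ?_, ?_⟩
          · intro h
            apply ha
            have : a * g ∈ Subgroup.center G := (center_iff (a * g)).mp h
            have ha' : a ∈ Subgroup.center G := by
              have := mul_mem this (inv_mem hgZ)
              simpa using this
            exact (center_iff a).mpr ha'
          · intro h
            apply hg
            have hcg : a * g = g * a := Subgroup.mem_center_iff.mp hgZ a
            calc g * g = (a * a) * (g * g) := by rw [haa]; group
              _ = a * (a * g) * g := by group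
              _ = a * (g * a) * g := by rw [hcg]
              _ = (a * g) * (a * g) := by group
              _ = 1 := h
        · exact ⟨a, ha, haa⟩
      · exact ⟨g, hgc, hg⟩
    refine ⟨x, x⁻¹, hx, ?_, ?_, ?_⟩
    · intro h
      apply hx
      have : x⁻¹ ∈ Subgroup.center G := (center_iff x⁻¹).mp h
      have := inv_mem this
      rw [inv_inv] at this
      exact (center_iff x).mpr this
    · intro h
      apply hxx
      nth_rewrite 2 [h]
      simp
    · rintro ⟨-, hnc⟩
      exact hnc (cyclic_pair_inv x)
end
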